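/- Let M be a left A-module with a connection ∇_M with respect to the universal differential calculus, and let N be any left A-module. Then the K-linear map c̃: M⊗N → N⊗M defined by c̃(m⊗n) = n⊗m − Σ m_A n ⊗ m_M is left A-linear, i.e. c̃((a m)⊗n) = ((a·(−))⊗id)(c̃(m⊗n)), the result of letting a act on the first tensor factor of c̃(m⊗n), for all a ∈ A, m ∈ M, n ∈ N. -/
import Mathlib


open TensorProduct

variable (K A M : Type*) [Field K] [Ring A] [Algebra K A]
  [AddCommGroup M] [Module K M] [Module A M] [IsScalarTower K A M]

/-- The action map `A ⊗ M → M`, `a ⊗ m ↦ a • m`. -/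
noncomputable def actMap : A ⊗[K] M →ₗ[K] M :=
  TensorProduct.lift (LinearMap.mk₂ K (fun a m => a • m)
    (fun a b m => add_smul a b m)
    (fun k a m => smul_assoc k a m)
    (fun a m n => smul_add a m n)
    (fun k a m => (smul_comm k a m).symm))

/-- Left multiplication by `a : A` on a left `A`-module, as a `K`-linear map. -/
def lsmulMap (a : A) : M →ₗ[K] M where
  toFun := fun m => a • m
  map_add' := fun x y => smul_add a x y
  map_smul' := fun k m => (smul_comm k a m).symm

/-- `a ↦ a • n` as a `K`-linear map `A → M`. -/
def smulBy (n : M) : A →ₗ[K] M where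
  toFun := fun a => a • n
  map_add' := fun a b => add_smul a b n
  map_smul' := fun k a => smul_assoc k a n

/-- `D : M → A ⊗ M` is a connection with respect to the universal differential
calculus. -/
def IsConnection (D : M →ₗ[K] A ⊗[K] M) : Prop :=
  (∀ m : M, actMap K A M (D m) = 0) ∧
  ∀ (a : A) (m : M),
    D (a • m) = LinearMap.rTensor M (LinearMap.mulLeft K a) (D m)
      + (1 : A) ⊗ₜ[K] (a • m) - a ⊗ₜ[K] m

/-- Flatness of a connection: `Σ 1 ⊗ m_A ⊗ m_M = Σ m_A ⊗ D(m_M)`. -/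
def IsFlatConnection (D : M →ₗ[K] A ⊗[K] M) : Prop :=
  ∀ m : M, (1 : A) ⊗ₜ[K] (D m) = LinearMap.lTensor A D (D m)

/-- The induced right operation `m·a := a m − Σ m_A a m_M`. -/
noncomputable def rop (D : M →ₗ[K] A ⊗[K] M) (m : M) (a : A) : M :=
  a • m - actMap K A M (LinearMap.rTensor M (LinearMap.mulRight K a) (D m))

variable (N : Type*) [AddCommGroup N] [Module K N] [Module A N] [IsScalarTower K A N]

/-- The map `N ⊗ A → N`, `n ⊗ a ↦ a • n`. -/
noncomputable def ract : N ⊗[K] A →ₗ[K] N :=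
  TensorProduct.lift (LinearMap.mk₂ K (fun n a => a • n)
    (fun n₁ n₂ a => smul_add a n₁ n₂)
    (fun k n a => (smul_comm k a n).symm)
    (fun n a b => add_smul a b n)
    (fun k n a => smul_assoc k a n))

/-- The map `c̃ : M ⊗ N → N ⊗ M`, `m ⊗ n ↦ n ⊗ m − Σ (m_A • n) ⊗ m_M`, associated
with a connection `D` on `M`. -/
noncomputable def ctMap (D : M →ₗ[K] A ⊗[K] M) : M ⊗[K] N →ₗ[K] N ⊗[K] M :=
  (LinearMap.id - (LinearMap.rTensor M (ract K A N)).comp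
      (((TensorProduct.assoc K N A M).symm.toLinearMap).comp
        (LinearMap.lTensor N D))).comp
    (TensorProduct.comm K M N).toLinearMap


lemma key_aux (a : A) (x : A ⊗[K] M) (n : N) :
    LinearMap.rTensor M (ract K A N)
      ((TensorProduct.assoc K N A M).symm
        (n ⊗ₜ[K] (LinearMap.rTensor M (LinearMap.mulLeft K a) x)))
    = LinearMap.rTensor M (lsmulMap K A N a)
        (LinearMap.rTensor M (ract K A N)
          ((TensorProduct.assoc K N A M).symm (n ⊗ₜ[K] x))) := by
  induction x using TensorProduct.induction_on with
  | zero => simp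
  | tmul b mm =>
      simp [ract, lsmulMap, mul_smul, LinearMap.rTensor_tmul]
  | add x y hx hy =>
      simp only [tmul_add, map_add, hx, hy]

/-- The map `c̃ : M ⊗ N → N ⊗ M`, `m ⊗ n ↦ n ⊗ m − Σ m_A n ⊗ m_M`,
associated with a connection `D` on `M` is left `A`-linear. -/
theorem ctMap_left_linear (D : M →ₗ[K] A ⊗[K] M) (hconn : IsConnection K A M D)
    (a : A) (m : M) (n : N) :
    ctMap K A M N D ((a • m) ⊗ₜ[K] n)
      = LinearMap.rTensor M (lsmulMap K A N a) (ctMap K A M N D (m ⊗ₜ[K] n)) := by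
  obtain ⟨h1, h2⟩ := hconn
  simp only [ctMap, LinearMap.comp_apply, LinearEquiv.coe_coe, TensorProduct.comm_tmul,
    LinearMap.sub_apply, LinearMap.id_apply, LinearMap.lTensor_tmul, h2 a m, map_add, map_sub,
    tmul_add, tmul_sub]
  rw [key_aux]
  simp only [TensorProduct.assoc_symm_tmul, LinearMap.rTensor_tmul, map_sub, tmul_sub]
  simp [ract, lsmulMap]
  abel
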